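/- In the extended affine Weyl group W̃ of type A₂ with twisting automorphism δ of order 2 (induced by the nontrivial diagram automorphism, δ(s₁) = s₂, δ(s₂) = s₁, δ(s₀) = s₀), the set 𝕆_{0,δ} consisting of all elements δ-conjugate to the identity contains, within W_a, exactly the elements {t^{k(α₁+2α₂)}s₂s₁, t^{k(2α₁+α₂)}s₁s₂, t^{k(α₁−α₂)} : k ∈ ℤ}; in particular every element of this set can be reduced to the identity by length-decreasing δ-conjugation steps. -/

import Mathlib

namespace A2

/-- Bundled data for the extended affine Weyl group `W̃ = P ⋊ W` of type `A₂` (for `PGL₃`),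
presented as `W̃ = W_a ⋊ Ω` with simple reflections `s0, s1, s2`, length-zero element `tau`
generating `Ω ≅ ℤ/3`, translations `t (m, n) = t^(m α₁ + n α₂)` for coroot-lattice elements,
and the Iwahori–Matsumoto length function `len`. -/
class A2Data (G : Type*) [Group G] where
  s0 : G
  s1 : G
  s2 : G
  tau : G
  t : ℤ × ℤ → G
  len : G → ℕ
  s0_sq : s0 * s0 = 1
  s1_sq : s1 * s1 = 1
  s2_sq : s2 * s2 = 1
  braid01 : (s0 * s1) ^ 3 = 1
  braid12 : (s1 * s2) ^ 3 = 1
  braid02 : (s0 * s2) ^ 3 = 1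
  tau_cube : tau ^ 3 = 1
  tau_s0 : tau * s0 * tau⁻¹ = s1
  tau_s1 : tau * s1 * tau⁻¹ = s2
  tau_s2 : tau * s2 * tau⁻¹ = s0
  t_add : ∀ a b : ℤ × ℤ, t (a + b) = t a * t b
  s1_t : ∀ m n : ℤ, s1 * t (m, n) * s1⁻¹ = t (n - m, n)
  s2_t : ∀ m n : ℤ, s2 * t (m, n) * s2⁻¹ = t (m, m - n)
  tau_t : ∀ m n : ℤ, tau * t (m, n) * tau⁻¹ = t (-n, m - n)
  s0_def : s0 = t (1, 1) * (s1 * s2 * s1)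
  decomp : ∀ g : G, ∃ (m n : ℤ) (w : G) (j : Fin 3),
    w ∈ ({1, s1, s2, s1 * s2, s2 * s1, s1 * s2 * s1} : Set G) ∧
    g = t (m, n) * w * tau ^ (j : ℕ)
  len_t : ∀ m n : ℤ,
    len (t (m, n)) = (2*m - n).natAbs + (2*n - m).natAbs + (m + n).natAbs
  len_t_s1 : ∀ m n : ℤ,
    len (t (m, n) * s1) = (2*m - n - 1).natAbs + (2*n - m).natAbs + (m + n).natAbs
  len_t_s2 : ∀ m n : ℤ,
    len (t (m, n) * s2) = (2*m - n).natAbs + (2*n - m - 1).natAbs + (m + n).natAbs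
  len_t_s1s2 : ∀ m n : ℤ,
    len (t (m, n) * (s1 * s2)) =
      (2*m - n - 1).natAbs + (2*n - m).natAbs + (m + n - 1).natAbs
  len_t_s2s1 : ∀ m n : ℤ,
    len (t (m, n) * (s2 * s1)) =
      (2*m - n).natAbs + (2*n - m - 1).natAbs + (m + n - 1).natAbs
  len_t_s1s2s1 : ∀ m n : ℤ,
    len (t (m, n) * (s1 * s2 * s1)) =
      (2*m - n - 1).natAbs + (2*n - m - 1).natAbs + (m + n - 1).natAbs
  len_mul_tau : ∀ g : G, len (g * tau) = len g
  len_tau_mul : ∀ g : G, len (tau * g) = len g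

namespace A2Data

variable {G : Type*} [Group G] [A2Data G]

/-- The affine Weyl group `W_a`, the subgroup generated by the simple reflections. -/
def Wa (G : Type*) [Group G] [A2Data G] : Subgroup G :=
  Subgroup.closure {s0, s1, s2}

/-- `y` is `W̃`-conjugate to `x`. -/
def ConjTo (x y : G) : Prop := ∃ g : G, g * x * g⁻¹ = y

/-- The `W̃`-conjugacy class of `x`. -/
def conjClass (x : G) : Set G := {y | ConjTo x y}

def IsConjClass (S : Set G) : Prop := ∃ x : G, S = conjClass x

/-- `n` is the minimal length of an element of `S`, attained on `S`. -/
def IsMinLen (S : Set G) (n : ℕ) : Prop :=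
  (∃ x ∈ S, len x = n) ∧ ∀ x ∈ S, n ≤ len x

/-- The set of simple affine reflections. -/
def simples (G : Type*) [Group G] [A2Data G] : Set G := {s0, s1, s2}

/-- The class `𝕆₁ = {t^{kα₁}s₁, t^{kα₂}s₂, t^{k(α₁+α₂)}s₁s₂s₁ : k ∈ ℤ}`. -/
def O1set (G : Type*) [Group G] [A2Data G] : Set G :=
  {x | ∃ k : ℤ, x = t (k, 0) * s1 ∨ x = t (0, k) * s2 ∨ x = t (k, k) * (s1 * s2 * s1)}

/-- The class `𝕆₂ = {t^λ s₁s₂, t^λ s₂s₁ : λ ∈ Q}`. -/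
def O2set (G : Type*) [Group G] [A2Data G] : Set G :=
  {x | ∃ m n : ℤ, x = t (m, n) * (s1 * s2) ∨ x = t (m, n) * (s2 * s1)}

/-- `C_i = {t^{kα₁+iα₂}s₁, t^{-iα₁+kα₂}s₂, t^{kα₁+(k-i)α₂}s₁s₂s₁ : k ∈ ℤ}`. -/
def Ciset (G : Type*) [Group G] [A2Data G] (i : ℤ) : Set G :=
  {x | ∃ k : ℤ, x = t (k, i) * s1 ∨ x = t (-i, k) * s2 ∨ x = t (k, k - i) * (s1 * s2 * s1)}

/-- `C'_i = {t^{kα₁-iα₂}s₁, t^{iα₁+kα₂}s₂, t^{(k-i)α₁+kα₂}s₁s₂s₁ : k ∈ ℤ}`. -/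
def Ci'set (G : Type*) [Group G] [A2Data G] (i : ℤ) : Set G :=
  {x | ∃ k : ℤ, x = t (k, -i) * s1 ∨ x = t (i, k) * s2 ∨ x = t (k - i, k) * (s1 * s2 * s1)}

/-- `𝕆_{id,τ} = {t^{mα₁+nα₂}τ, t^{mα₁+nα₂}s₁s₂τ : m, n ∈ ℤ}`. -/
def OIdtau (G : Type*) [Group G] [A2Data G] : Set G :=
  {x | ∃ m n : ℤ, x = t (m, n) * tau ∨ x = t (m, n) * (s1 * s2) * tau}

/-- `𝕆_{i,τ} = {t^{kα₁+iα₂}s₁s₂s₁τ, t^{(k+i-1)α₁+kα₂}s₂τ, t^{(1-i)α₁+kα₂}s₁τ : k ∈ ℤ}`. -/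
def Oitau (G : Type*) [Group G] [A2Data G] (i : ℤ) : Set G :=
  {x | ∃ k : ℤ, x = t (k, i) * (s1 * s2 * s1) * tau ∨ x = t (k + i - 1, k) * s2 * tau ∨
    x = t (1 - i, k) * s1 * tau}

/-- One non-length-increasing conjugation step by a simple reflection. -/
def StepTo (x y : G) : Prop :=
  ∃ s ∈ simples G, y = s * x * s ∧ len y ≤ len x

def RedTo : G → G → Prop := Relation.ReflTransGen StepTo

/-- The relation `≈` of the He–Nie reduction method. -/
def Approx (x y : G) : Prop := RedTo x y ∧ RedTo y x

/-- `f` satisfies the defining reduction recursion for the class polynomials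
`f_{w̃,𝕆}`, written as polynomials in the variable `X = v - v⁻¹`. -/
def ClassPolySystem (f : G → Set G → Polynomial ℤ) : Prop :=
  (∀ x : G, (∀ y : G, ConjTo x y → len x ≤ len y) →
    ∀ O : Set G, IsConjClass O → (x ∈ O → f x O = 1) ∧ (x ∉ O → f x O = 0)) ∧
  (∀ x x1 s : G, (∃ y : G, ConjTo x y ∧ len y < len x) →
    Approx x x1 → s ∈ simples G → len (s * x1 * s) < len x1 → len x1 = len x →
    ∀ O : Set G, f x O = Polynomial.X * f (s * x1) O + f (s * x1 * s) O)

/-- `y` is `δ`-conjugate to `x`. -/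
def DConjTo (δ : G ≃* G) (x y : G) : Prop := ∃ g : G, g * x * (δ g)⁻¹ = y

def dConjClass (δ : G ≃* G) (x : G) : Set G := {y | DConjTo δ x y}

def IsDConjClass (δ : G ≃* G) (S : Set G) : Prop := ∃ x : G, S = dConjClass δ x

def DStepTo (δ : G ≃* G) (x y : G) : Prop :=
  ∃ s ∈ simples G, y = s * x * (δ s)⁻¹ ∧ len y ≤ len x

def DRedTo (δ : G ≃* G) : G → G → Prop := Relation.ReflTransGen (DStepTo δ)

def DApprox (δ : G ≃* G) (x y : G) : Prop := DRedTo δ x y ∧ DRedTo δ y x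

/-- `f` satisfies the `δ`-twisted reduction recursion for the class polynomials
`f_{w̃,𝕆}`, written as polynomials in `X = v - v⁻¹`. -/
def DClassPolySystem (δ : G ≃* G) (f : G → Set G → Polynomial ℤ) : Prop :=
  (∀ x : G, (∀ y : G, DConjTo δ x y → len x ≤ len y) →
    ∀ O : Set G, IsDConjClass δ O → (x ∈ O → f x O = 1) ∧ (x ∉ O → f x O = 0)) ∧
  (∀ x x1 s : G, (∃ y : G, DConjTo δ x y ∧ len y < len x) →
    DApprox δ x x1 → s ∈ simples G → len (s * x1 * (δ s)⁻¹) < len x1 → len x1 = len x →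
    ∀ O : Set G, f x O = Polynomial.X * f (s * x1) O + f (s * x1 * (δ s)⁻¹) O)

/-- The diagram automorphism `δ` of `W̃` of type `A₂`: it fixes `s0`, swaps `s1` and
`s2`, inverts `tau`, swaps the coroot coordinates, and preserves lengths. -/
def IsDiagramAut (δ : G ≃* G) : Prop :=
  δ s0 = s0 ∧ δ s1 = s2 ∧ δ s2 = s1 ∧ δ tau = tau⁻¹ ∧
  (∀ m n : ℤ, δ (t (m, n)) = t (n, m)) ∧ ∀ g : G, len (δ g) = len g

/-- Elementary strong conjugation. -/
def ElemStrongConj (x y : G) : Prop :=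
  len x = len y ∧ ∃ g : G, y = g * x * g⁻¹ ∧
    (len (g * x) = len g + len x ∨ len (x * g⁻¹) = len g + len x)

/-- Strong conjugation: a chain of elementary strong conjugations. -/
def StrongConj : G → G → Prop := Relation.ReflTransGen ElemStrongConj

end A2Data

open A2Data

/-- The affine Hecke algebra attached to `W̃`, over `A = ℤ[v, v⁻¹]`, with standard
basis `T` and the quadratic and braid-type multiplication relations. -/
class HeckeData (G : Type*) [Group G] [A2Data G] (H : Type*) [Ring H]
    [Algebra (LaurentPolynomial ℤ) H] where
  T : G → H
  T_one : T 1 = 1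
  T_mul : ∀ x y : G, len (x * y) = len x + len y → T x * T y = T (x * y)
  T_quad : ∀ s ∈ simples G,
    (T s - algebraMap (LaurentPolynomial ℤ) H (LaurentPolynomial.T 1)) *
      (T s + algebraMap (LaurentPolynomial ℤ) H (LaurentPolynomial.T (-1))) = 0

/-- The commutator `ℤ[v,v⁻¹]`-submodule `[H̃, H̃]`. -/
noncomputable def commSub (H : Type*) [Ring H] [Algebra (LaurentPolynomial ℤ) H] :
    Submodule (LaurentPolynomial ℤ) H :=
  Submodule.span (LaurentPolynomial ℤ) {z : H | ∃ a b : H, z = a * b - b * a}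

/-- The `δ`-twisted commutator `ℤ[v,v⁻¹]`-submodule `[H̃, H̃]_δ`. -/
noncomputable def dCommSub {H : Type*} [Ring H] [Algebra (LaurentPolynomial ℤ) H]
    (δH : H →ₐ[LaurentPolynomial ℤ] H) : Submodule (LaurentPolynomial ℤ) H :=
  Submodule.span (LaurentPolynomial ℤ) {z : H | ∃ a b : H, z = a * b - b * (δH a)}

end A2

/-!
Every element of `W̃` is `z = k τ^j` with `k = t^λ w ∈ W_a`, `w` in the finite Weyl group. As
`δ τ = τ⁻¹`, `z δ(z)⁻¹ = k τ^{2j} δ(k)⁻¹`, so if it lies in `W_a` then so does `τ^{2j}`; since `1`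
is the only element of length zero in `W_a`, neither `τ` nor `τ²` lies in `W_a`, so `j = 0`. Then
`z δ(z)⁻¹ = t^λ (w δ(w)⁻¹) t^{-δ(λ)}` with `w δ(w)⁻¹ ∈ {1, s₁s₂, s₂s₁}`, giving the three
families. Conversely, every element `≠ 1` of the three families has a `δ`-conjugate by a simple
reflection that is strictly shorter and again in the families; so it reduces to `1`, and reading
the chain backwards writes it as `g δ(g)⁻¹` with `g ∈ W_a`.
-/

theorem Relation.reflTransGen_of_forall_ne_exists {α : Type*} {r : α → α → Prop} (f : α → ℕ)
    (hr : ∀ {x y}, r x y → f y < f x) {S : Set α} {a : α}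
    (h : ∀ x ∈ S, x ≠ a → ∃ y ∈ S, r x y) {x : α} (hx : x ∈ S) :
    Relation.ReflTransGen r x a := by
  induction x using (measure f).wf.induction with
  | _ x ih =>
    by_cases hxa : x = a
    · exact hxa ▸ .refl
    · obtain ⟨y, hy, hxy⟩ := h x hx hxa
      exact .head hxy (ih y (hr hxy) hy)

theorem exists_mul_map_inv_eq_of_reflTransGen {G : Type*} [Group G] (δ : G ≃* G)
    (H : Subgroup G) {r : G → G → Prop} (hr : ∀ {a b}, r a b → ∃ s ∈ H, b = s * a * (δ s)⁻¹)
    {x : G} (hx : Relation.ReflTransGen r x 1) : ∃ g ∈ H, g * (δ g)⁻¹ = x := by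
  induction hx using Relation.ReflTransGen.head_induction_on with
  | refl => exact ⟨1, one_mem H, by simp⟩
  | head hxy _ ih =>
    obtain ⟨g, hg, hgy⟩ := ih
    obtain ⟨s, hs, rfl⟩ := hr hxy
    refine ⟨s⁻¹ * g, mul_mem (inv_mem hs) hg, ?_⟩
    rw [map_mul, map_inv, mul_inv_rev, inv_inv, ← mul_assoc, mul_assoc _ g, hgy]
    group

namespace A2
namespace A2Data

variable {G : Type*} [Group G] [A2Data G]

def tHom : Multiplicative (ℤ × ℤ) →* G :=
  MonoidHom.mk' (fun a => t a.toAdd) fun _ _ => t_add _ _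

lemma t_zero : (t (0, 0) : G) = 1 := map_one (tHom (G := G))

lemma t_inv (m n : ℤ) : (t (m, n) : G)⁻¹ = t (-m, -n) :=
  (map_inv (tHom (G := G)) (Multiplicative.ofAdd (m, n))).symm

lemma t_mul_t (m n p q : ℤ) : (t (m, n) : G) * t (p, q) = t (m + p, n + q) :=
  (t_add _ _).symm

lemma t_mul_t_mul (m n p q : ℤ) (x : G) : t (m, n) * (t (p, q) * x) = t (m + p, n + q) * x := by
  rw [← mul_assoc, t_mul_t]

lemma inv_eq_self_of_mem_simples {s : G} (hs : s ∈ simples G) : s⁻¹ = s := by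
  rcases hs with rfl | rfl | rfl
  exacts [inv_eq_of_mul_eq_one_right s0_sq, inv_eq_of_mul_eq_one_right s1_sq,
    inv_eq_of_mul_eq_one_right s2_sq]

lemma s0_mem_simples : (s0 : G) ∈ simples G := Or.inl rfl
lemma s1_mem_simples : (s1 : G) ∈ simples G := Or.inr (Or.inl rfl)
lemma s2_mem_simples : (s2 : G) ∈ simples G := Or.inr (Or.inr rfl)

lemma s0_inv : (s0 : G)⁻¹ = s0 := inv_eq_self_of_mem_simples s0_mem_simples
lemma s1_inv : (s1 : G)⁻¹ = s1 := inv_eq_self_of_mem_simples s1_mem_simples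
lemma s2_inv : (s2 : G)⁻¹ = s2 := inv_eq_self_of_mem_simples s2_mem_simples

lemma s1_mul_t (m n : ℤ) : (s1 : G) * t (m, n) = t (n - m, n) * s1 :=
  mul_inv_eq_iff_eq_mul.mp (s1_t m n)

lemma s2_mul_t (m n : ℤ) : (s2 : G) * t (m, n) = t (m, m - n) * s2 :=
  mul_inv_eq_iff_eq_mul.mp (s2_t m n)

lemma s1_mul_t_mul (m n : ℤ) (x : G) : s1 * (t (m, n) * x) = t (n - m, n) * (s1 * x) := by
  rw [← mul_assoc, s1_mul_t, mul_assoc]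

lemma s2_mul_t_mul (m n : ℤ) (x : G) : s2 * (t (m, n) * x) = t (m, m - n) * (s2 * x) := by
  rw [← mul_assoc, s2_mul_t, mul_assoc]

lemma s1_mul_s1_mul (x : G) : s1 * (s1 * x) = x := by rw [← mul_assoc, s1_sq, one_mul]

lemma s2_mul_s2_mul (x : G) : s2 * (s2 * x) = x := by rw [← mul_assoc, s2_sq, one_mul]

lemma s1_s2_mul_t (m n : ℤ) : (s1 * s2 : G) * t (m, n) = t (-n, m - n) * (s1 * s2) := by
  rw [mul_assoc, s2_mul_t, ← mul_assoc, s1_mul_t, mul_assoc]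
  congr 3
  ring

lemma s2_s1_mul_t (m n : ℤ) : (s2 * s1 : G) * t (m, n) = t (n - m, -m) * (s2 * s1) := by
  rw [mul_assoc, s1_mul_t, ← mul_assoc, s2_mul_t, mul_assoc]
  congr 3
  ring

lemma s1_mul_t_mul_s2 (m n : ℤ) : (s1 : G) * t (m, n) * s2 = t (n - m, n) * (s1 * s2) := by
  rw [s1_mul_t, mul_assoc]

lemma s2_mul_t_mul_s1 (m n : ℤ) : (s2 : G) * t (m, n) * s1 = t (m, m - n) * (s2 * s1) := by
  rw [s2_mul_t, mul_assoc]

lemma s1_mul_t_s1_s2_mul_s2 (m n : ℤ) :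
    (s1 : G) * (t (m, n) * (s1 * s2)) * s2 = t (n - m, n) := by
  simp only [mul_assoc, s2_sq, mul_one, s1_mul_t_mul, s1_sq]

lemma s2_mul_t_s2_s1_mul_s1 (m n : ℤ) :
    (s2 : G) * (t (m, n) * (s2 * s1)) * s1 = t (m, m - n) := by
  simp only [mul_assoc, s1_sq, mul_one, s2_mul_t_mul, s2_sq]

lemma s2_s1_s2 : (s2 : G) * (s1 * s2) = s1 * (s2 * s1) := by
  have h : (s1 * s2 * s1 : G) * (s2 * s1 * s2) = 1 := by
    rw [← braid12, pow_three]; simp only [mul_assoc]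
  simpa only [mul_inv_rev, s1_inv, s2_inv, mul_assoc] using eq_inv_of_mul_eq_one_right h

lemma s2_s1_s2_mul (x : G) : s2 * (s1 * (s2 * x)) = s1 * (s2 * (s1 * x)) := by
  simpa only [mul_assoc] using congrArg (· * x) (s2_s1_s2 (G := G))

lemma s0_mul_t_s2_s1_mul_s0 (m n : ℤ) :
    (s0 : G) * (t (m, n) * (s2 * s1)) * s0 = t (2 - n, 1 - m) * (s1 * s2) := by
  rw [s0_def]
  simp only [mul_assoc, mul_one, t_mul_t_mul, s1_mul_t_mul, s2_mul_t_mul, s1_mul_s1_mul, s1_sq,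
    s2_s1_s2_mul]
  ring_nf

lemma s0_mul_t_s1_s2_mul_s0 (m n : ℤ) :
    (s0 : G) * (t (m, n) * (s1 * s2)) * s0 = t (1 - n, 2 - m) * (s2 * s1) := by
  rw [s0_def]
  simp only [mul_assoc, mul_one, t_mul_t_mul, s1_mul_t_mul, s2_mul_t_mul, s1_mul_s1_mul, s2_sq]
  ring_nf

def finWeyl (G : Type*) [Group G] [A2Data G] : Set G :=
  {1, s1, s2, s1 * s2, s2 * s1, s1 * s2 * s1}

lemma mul_s1_mem_finWeyl {w : G} (hw : w ∈ finWeyl G) : w * s1 ∈ finWeyl G := by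
  rcases hw with rfl | rfl | rfl | rfl | rfl | rfl <;>
    simp [finWeyl, mul_assoc, s1_sq]

lemma mul_s2_mem_finWeyl {w : G} (hw : w ∈ finWeyl G) : w * s2 ∈ finWeyl G := by
  rcases hw with rfl | rfl | rfl | rfl | rfl | rfl <;>
    simp [finWeyl, mul_assoc, s2_sq, s1_mul_s1_mul, s2_s1_s2]

lemma exists_mul_t_eq_t_mul {w : G} (hw : w ∈ finWeyl G) (m n : ℤ) :
    ∃ p q : ℤ, w * t (m, n) = t (p, q) * w := by
  let Normalizes (u : G) : Prop := ∀ m n : ℤ, ∃ p q : ℤ, u * t (m, n) = t (p, q) * u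
  have hmul {u v : G} (hu : Normalizes u) (hv : Normalizes v) : Normalizes (u * v) := by
    intro m n
    obtain ⟨p, q, hv⟩ := hv m n
    obtain ⟨p', q', hu⟩ := hu p q
    exact ⟨p', q', by rw [mul_assoc, hv, ← mul_assoc, hu, mul_assoc]⟩
  have h1 : Normalizes s1 := fun m n => ⟨_, _, s1_mul_t m n⟩
  have h2 : Normalizes s2 := fun m n => ⟨_, _, s2_mul_t m n⟩
  rcases hw with rfl | rfl | rfl | rfl | rfl | rfl
  exacts [⟨m, n, by rw [one_mul, mul_one]⟩, h1 m n, h2 m n, hmul h1 h2 m n, hmul h2 h1 m n,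
    hmul (hmul h1 h2) h1 m n]

lemma exists_t_mul_mul_simple {m n : ℤ} {w s : G} (hw : w ∈ finWeyl G) (hs : s ∈ simples G) :
    ∃ p q : ℤ, ∃ w' ∈ finWeyl G, t (m, n) * w * s = t (p, q) * w' := by
  rcases hs with rfl | rfl | rfl
  · obtain ⟨p, q, h⟩ := exists_mul_t_eq_t_mul hw 1 1
    refine ⟨m + p, n + q, w * s1 * s2 * s1,
      mul_s1_mem_finWeyl (mul_s2_mem_finWeyl (mul_s1_mem_finWeyl hw)), ?_⟩
    have : t (m, n) * w * s0 = t (m, n) * (w * t (1, 1)) * (s1 * s2 * s1) := by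
      rw [s0_def]; group
    rw [this, h, ← t_mul_t]
    group
  · exact ⟨m, n, w * s1, mul_s1_mem_finWeyl hw, mul_assoc _ _ _⟩
  · exact ⟨m, n, w * s2, mul_s2_mem_finWeyl hw, mul_assoc _ _ _⟩

lemma exists_eq_t_mul_of_mem_Wa {g : G} (hg : g ∈ Wa G) :
    ∃ m n : ℤ, ∃ w ∈ finWeyl G, g = t (m, n) * w := by
  induction hg using Subgroup.closure_induction_right with
  | one => exact ⟨0, 0, 1, Or.inl rfl, by rw [t_zero, mul_one]⟩
  | mul_right x _ s hs ih =>
    obtain ⟨m, n, w, hw, rfl⟩ := ih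
    obtain ⟨p, q, w', hw', h⟩ := exists_t_mul_mul_simple hw hs
    exact ⟨p, q, w', hw', h⟩
  | mul_inv_cancel x _ s hs ih =>
    obtain ⟨m, n, w, hw, rfl⟩ := ih
    obtain ⟨p, q, w', hw', h⟩ := exists_t_mul_mul_simple hw hs
    exact ⟨p, q, w', hw', by rw [inv_eq_self_of_mem_simples hs, h]⟩

lemma mem_Wa_of_mem_simples {s : G} (hs : s ∈ simples G) : s ∈ Wa G :=
  Subgroup.subset_closure hs

lemma s0_mem_Wa : (s0 : G) ∈ Wa G := mem_Wa_of_mem_simples s0_mem_simples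
lemma s1_mem_Wa : (s1 : G) ∈ Wa G := mem_Wa_of_mem_simples s1_mem_simples
lemma s2_mem_Wa : (s2 : G) ∈ Wa G := mem_Wa_of_mem_simples s2_mem_simples

lemma finWeyl_subset_Wa : finWeyl G ⊆ Wa G := by
  rintro w (rfl | rfl | rfl | rfl | rfl | rfl)
  exacts [one_mem _, s1_mem_Wa, s2_mem_Wa, mul_mem s1_mem_Wa s2_mem_Wa,
    mul_mem s2_mem_Wa s1_mem_Wa, mul_mem (mul_mem s1_mem_Wa s2_mem_Wa) s1_mem_Wa]

lemma t_mem_Wa (m n : ℤ) : (t (m, n) : G) ∈ Wa G := by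
  have h11 : (t (1, 1) : G) ∈ Wa G := by
    have : (t (1, 1) : G) = s0 * (s1 * s2 * s1)⁻¹ := by rw [s0_def]; group
    rw [this]
    exact mul_mem s0_mem_Wa (inv_mem (mul_mem (mul_mem s1_mem_Wa s2_mem_Wa) s1_mem_Wa))
  have h01 : (t (0, 1) : G) ∈ Wa G := by
    rw [show ((0 : ℤ), (1 : ℤ)) = (1 - 1, 1) by norm_num, ← s1_t]
    exact mul_mem (mul_mem s1_mem_Wa h11) (inv_mem s1_mem_Wa)
  have h10 : (t (1, 0) : G) ∈ Wa G := by
    rw [show ((1 : ℤ), (0 : ℤ)) = (1, 1 - 1) by norm_num, ← s2_t]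
    exact mul_mem (mul_mem s2_mem_Wa h11) (inv_mem s2_mem_Wa)
  have hmn : Multiplicative.ofAdd (m, n) =
      Multiplicative.ofAdd (1, 0) ^ m * Multiplicative.ofAdd (0, 1) ^ n := by
    rw [← ofAdd_zsmul, ← ofAdd_zsmul, ← ofAdd_add]
    simp
  change tHom (Multiplicative.ofAdd (m, n)) ∈ Wa G
  rw [hmn, map_mul, map_zpow, map_zpow]
  exact mul_mem (zpow_mem h10 m) (zpow_mem h01 n)

lemma len_one : len (1 : G) = 0 := by
  simpa [t_zero] using len_t (G := G) 0 0

lemma eq_one_of_mem_Wa_of_len_eq_zero {g : G} (hg : g ∈ Wa G) (h : len g = 0) : g = 1 := by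
  obtain ⟨m, n, w, hw, rfl⟩ := exists_eq_t_mul_of_mem_Wa hg
  rcases hw with rfl | rfl | rfl | rfl | rfl | rfl
  · rw [mul_one, len_t] at h
    rw [mul_one]
    obtain ⟨rfl, rfl⟩ : m = 0 ∧ n = 0 := by omega
    exact t_zero
  · rw [len_t_s1] at h; omega
  · rw [len_t_s2] at h; omega
  · rw [len_t_s1s2] at h; omega
  · rw [len_t_s2s1] at h; omega
  · rw [len_t_s1s2s1] at h; omega

lemma tau_ne_one : (tau : G) ≠ 1 := by
  intro h
  have h10 := tau_t (G := G) 1 0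
  rw [h, one_mul, inv_one, mul_one] at h10
  have := congrArg (fun g => len (g * t (0, -1))) h10
  norm_num [t_mul_t, len_t] at this

lemma tau_not_mem_Wa : (tau : G) ∉ Wa G := fun h =>
  tau_ne_one <| eq_one_of_mem_Wa_of_len_eq_zero h <| by
    simpa [len_one] using len_mul_tau (G := G) 1

lemma eq_zero_of_tau_pow_mul_self_mem_Wa {j : Fin 3}
    (h : (tau : G) ^ (j : ℕ) * tau ^ (j : ℕ) ∈ Wa G) : j = 0 := by
  have h4 : (tau : G) ^ 4 = tau := by rw [pow_succ, tau_cube, one_mul]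
  rw [← pow_add] at h
  fin_cases j
  · rfl
  · exact absurd (by simpa [← pow_add, h4] using mul_mem h h) tau_not_mem_Wa
  · exact absurd (by simpa [h4] using h) tau_not_mem_Wa

section Diagram

variable {δ : G ≃* G}

lemma IsDiagramAut.map_s0 (hδ : IsDiagramAut δ) : δ s0 = s0 := hδ.1
lemma IsDiagramAut.map_s1 (hδ : IsDiagramAut δ) : δ s1 = s2 := hδ.2.1
lemma IsDiagramAut.map_s2 (hδ : IsDiagramAut δ) : δ s2 = s1 := hδ.2.2.1
lemma IsDiagramAut.map_tau (hδ : IsDiagramAut δ) : δ tau = tau⁻¹ := hδ.2.2.2.1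
lemma IsDiagramAut.map_t (hδ : IsDiagramAut δ) (m n : ℤ) : δ (t (m, n)) = t (n, m) :=
  hδ.2.2.2.2.1 m n

lemma map_mem_simples (hδ : IsDiagramAut δ) {s : G} (hs : s ∈ simples G) : δ s ∈ simples G := by
  rcases hs with rfl | rfl | rfl
  · rw [hδ.map_s0]; exact s0_mem_simples
  · rw [hδ.map_s1]; exact s2_mem_simples
  · rw [hδ.map_s2]; exact s1_mem_simples

lemma map_mem_Wa (hδ : IsDiagramAut δ) {g : G} (hg : g ∈ Wa G) : δ g ∈ Wa G := by
  induction hg using Subgroup.closure_induction with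
  | mem s hs => exact mem_Wa_of_mem_simples (map_mem_simples hδ hs)
  | one => rw [map_one]; exact one_mem _
  | mul x y _ _ hx hy => rw [map_mul]; exact mul_mem hx hy
  | inv x _ hx => rw [map_inv]; exact inv_mem hx

lemma mul_map_inv_mem_of_mem_finWeyl (hδ : IsDiagramAut δ) {w : G} (hw : w ∈ finWeyl G) :
    w * (δ w)⁻¹ ∈ ({1, s1 * s2, s2 * s1} : Set G) := by
  rcases hw with rfl | rfl | rfl | rfl | rfl | rfl <;>
    simp [hδ.map_s1, hδ.map_s2, s1_inv, s2_inv, mul_assoc, s1_sq, s1_mul_s1_mul, s2_mul_s2_mul,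
      s2_s1_s2, s2_s1_s2_mul]

def O0deltaSet (G : Type*) [Group G] [A2Data G] : Set G :=
  {x | ∃ k : ℤ, x = t (k, 2*k) * (s2 * s1) ∨ x = t (2*k, k) * (s1 * s2) ∨ x = t (k, -k)}

lemma dConjClass_one_inter_Wa_subset (hδ : IsDiagramAut δ) :
    dConjClass δ (1 : G) ∩ Wa G ⊆ O0deltaSet G := by
  rintro y ⟨⟨z, rfl⟩, hy⟩
  obtain ⟨m, n, w, j, hw, rfl⟩ := decomp z
  have hk : t (m, n) * w ∈ Wa G := mul_mem (t_mem_Wa m n) (finWeyl_subset_Wa hw)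
  obtain rfl : j = 0 := by
    refine eq_zero_of_tau_pow_mul_self_mem_Wa (G := G) ?_
    convert mul_mem (mul_mem (inv_mem hk) hy) (map_mem_Wa hδ hk) using 1
    rw [map_mul _ _ ((tau : G) ^ _), map_pow, hδ.map_tau]
    group
  have hy' : t (m, n) * w * (δ (t (m, n) * w))⁻¹ = t (m, n) * (w * (δ w)⁻¹) * t (-n, -m) := by
    simp only [map_mul, hδ.map_t, mul_inv_rev, t_inv, mul_assoc]
  simp only [Fin.val_zero, pow_zero, mul_one, hy']
  rcases mul_map_inv_mem_of_mem_finWeyl hδ hw with h | h | h <;> rw [h]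
  · exact ⟨m - n, .inr (.inr (by rw [mul_one, t_mul_t]; congr 2; ring))⟩
  · refine ⟨m, .inr (.inl ?_)⟩
    rw [mul_assoc, s1_s2_mul_t, ← mul_assoc, t_mul_t]
    congr 3 <;> ring
  · refine ⟨n, .inl ?_⟩
    rw [mul_assoc, s2_s1_mul_t, ← mul_assoc, t_mul_t]
    congr 3 <;> ring

lemma exists_len_lt_dstep (hδ : IsDiagramAut δ) {x : G} (hx : x ∈ O0deltaSet G) (hx1 : x ≠ 1) :
    ∃ y ∈ O0deltaSet G, (∃ s ∈ simples G, y = s * x * (δ s)⁻¹) ∧ len y < len x := by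
  obtain ⟨k, rfl | rfl | rfl⟩ := hx
  · rcases le_or_gt k 0 with hk | hk
    · refine ⟨t (k, k - 2*k), ⟨k, .inr (.inr (by congr 2; ring))⟩,
        ⟨s2, s2_mem_simples, by rw [hδ.map_s2, s1_inv, s2_mul_t_s2_s1_mul_s1]⟩, ?_⟩
      rw [len_t, len_t_s2s1]; omega
    · refine ⟨t (2 - 2*k, 1 - k) * (s1 * s2), ⟨1 - k, .inr (.inl (by congr 3; ring))⟩,
        ⟨s0, s0_mem_simples, by rw [hδ.map_s0, s0_inv, s0_mul_t_s2_s1_mul_s0]⟩, ?_⟩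
      rw [len_t_s1s2, len_t_s2s1]; omega
  · rcases le_or_gt k 0 with hk | hk
    · refine ⟨t (k - 2*k, k), ⟨-k, .inr (.inr (by congr 2 <;> ring))⟩,
        ⟨s1, s1_mem_simples, by rw [hδ.map_s1, s2_inv, s1_mul_t_s1_s2_mul_s2]⟩, ?_⟩
      rw [len_t, len_t_s1s2]; omega
    · refine ⟨t (1 - k, 2 - 2*k) * (s2 * s1), ⟨1 - k, .inl (by congr 3; ring)⟩,
        ⟨s0, s0_mem_simples, by rw [hδ.map_s0, s0_inv, s0_mul_t_s1_s2_mul_s0]⟩, ?_⟩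
      rw [len_t_s1s2, len_t_s2s1]; omega
  · rcases lt_trichotomy k 0 with hk | rfl | hk
    · refine ⟨t (-k - k, -k) * (s1 * s2), ⟨-k, .inr (.inl (by congr 3; ring))⟩,
        ⟨s1, s1_mem_simples, by rw [hδ.map_s1, s2_inv, s1_mul_t_mul_s2]⟩, ?_⟩
      rw [len_t, len_t_s1s2]; omega
    · exact absurd (by rw [neg_zero, t_zero]) hx1
    · refine ⟨t (k, k - -k) * (s2 * s1), ⟨k, .inl (by congr 3; ring)⟩,
        ⟨s2, s2_mem_simples, by rw [hδ.map_s2, s1_inv, s2_mul_t_mul_s1]⟩, ?_⟩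
      rw [len_t, len_t_s2s1]; omega

end Diagram

end A2Data
end A2

open A2 A2Data in
/-- The elements of `W_a` that are `δ`-conjugate to the identity are exactly
`{t^{k(α₁+2α₂)}s₂s₁, t^{k(2α₁+α₂)}s₁s₂, t^{k(α₁-α₂)} : k ∈ ℤ}`; in particular every
such element can be reduced to the identity by length-decreasing `δ`-conjugation steps
by simple reflections. -/
theorem statement_6 {G : Type*} [Group G] [A2Data G] (δ : G ≃* G)
    (hδ : IsDiagramAut δ) :
    dConjClass δ (1 : G) ∩ (Wa G : Set G) =
      {x : G | ∃ k : ℤ, x = t (k, 2*k) * (s2 * s1) ∨ x = t (2*k, k) * (s1 * s2) ∨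
        x = t (k, -k)} ∧
    ∀ x ∈ ({x : G | ∃ k : ℤ, x = t (k, 2*k) * (s2 * s1) ∨ x = t (2*k, k) * (s1 * s2) ∨
        x = t (k, -k)} : Set G),
      Relation.ReflTransGen
        (fun a b : G => (∃ s ∈ simples G, b = s * a * (δ s)⁻¹) ∧ len b < len a) x 1 := by
  have hred : ∀ x ∈ O0deltaSet G, Relation.ReflTransGen
      (fun a b : G => (∃ s ∈ simples G, b = s * a * (δ s)⁻¹) ∧ len b < len a) x 1 :=
    fun x hx => Relation.reflTransGen_of_forall_ne_exists len (fun h => h.2)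
      (fun _ hx hx1 => exists_len_lt_dstep hδ hx hx1) hx
  refine ⟨(dConjClass_one_inter_Wa_subset hδ).antisymm fun x hx => ?_, hred⟩
  obtain ⟨g, hg, rfl⟩ := exists_mul_map_inv_eq_of_reflTransGen δ (Wa G)
    (fun h => h.1.imp fun s hs => ⟨mem_Wa_of_mem_simples hs.1, hs.2⟩) (hred x hx)
  exact ⟨⟨g, by rw [mul_one]⟩, mul_mem hg (inv_mem (map_mem_Wa hδ hg))⟩
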